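/- Let d ≥ 4 be an integer and (1,γ,δ) ∈ W_d. There exist (2,γ₁,δ₁), (2,γ₂,δ₂) ∈ W_d with γ₁ + γ₂ = γ + d and δ₁ + δ₂ = δ if and only if it is not the case that ρ ≠ 0 and (γ,δ) = (k', ⌊ρ/2⌋), and it is not the case that d is odd and γ = δ = 0. -/

import Mathlib

/-- `W_d`: triples `(r,γ,δ)` encoding the degree-`d` monomials invariant under the
action of the diagonal matrix `M(1,e,e²,e³)`. -/
def Wset (d : ℕ) : Set (ℤ × ℤ × ℤ) :=
  {x | 0 ≤ x.1 ∧ x.1 ≤ 3 ∧ 0 ≤ x.2.1 ∧ 0 ≤ x.2.2 ∧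
    0 ≤ x.2.2 + 2 * x.2.1 + (1 - x.1) * (d : ℤ) ∧ 2 * x.2.2 + 3 * x.2.1 ≤ x.1 * (d : ℤ)}

/-!
A point `(2, γ, δ)` of `W_d` is determined by the slacks `x = 2d - 2δ - 3γ` and
`y = 2γ + δ - d` of its two nontrivial inequalities, and `(x, y) ↦ (x + 2y, d - 2x - 3y)`
inverts this, so the slice `r = 2` is a unimodular image of the lattice triangle
`Δ = {x, y ≥ 0, 2x + 3y ≤ d}`. The question becomes whether the lattice point
`(d - 2δ - 3γ, 2γ + δ)` of `2Δ` is a sum of two lattice points of `Δ`. Halving it works away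
from the edge `2x + 3y = 2d`; near that edge the summand `(⌊x/2⌋ - 1, ⌊y/2⌋ + 1)` works,
except at three points, which are the three exceptions of the theorem.
-/
open scoped Pointwise

def weightedTriangle (d : ℤ) : Set (ℤ × ℤ) :=
  {p | 0 ≤ p.1 ∧ 0 ≤ p.2 ∧ 2 * p.1 + 3 * p.2 ≤ d}

theorem mem_weightedTriangle_add_self_iff {d X Y : ℤ} (hX : 0 ≤ X) (hY : 0 ≤ Y)
    (hXY : 2 * X + 3 * Y ≤ 2 * d) :
    (X, Y) ∈ weightedTriangle d + weightedTriangle d ↔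
      ¬ (Y = 0 ∧ X = d ∧ Odd d) ∧ ¬ (X = 1 ∧ 3 * Y + 2 = 2 * d) ∧
        ¬ (X = 0 ∧ 3 * Y + 1 = 2 * d) := by
  simp only [Set.mem_add, weightedTriangle, Set.mem_ofPred_eq, Prod.exists, Prod.mk_add_mk,
    Prod.mk.injEq, Int.odd_iff]
  constructor
  · rintro ⟨x₁, y₁, h₁, x₂, y₂, h₂, rfl, rfl⟩
    omega
  · intro hexc
    by_cases hhalf : 2 * (X / 2) + 3 * ((Y + 1) / 2) ≤ d ∧ 2 * (X - X / 2) + 3 * (Y / 2) ≤ d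
    · exact ⟨X / 2, (Y + 1) / 2, by omega, X - X / 2, Y / 2, by omega, by omega, by omega⟩
    · exact ⟨X / 2 - 1, Y / 2 + 1, by omega, X - X / 2 + 1, Y - Y / 2 - 1, by omega,
        by omega, by omega⟩

theorem exists_Wset_two_sum_iff (d : ℕ) (γ δ : ℤ) :
    (∃ γ₁ δ₁ γ₂ δ₂ : ℤ, ((2:ℤ), γ₁, δ₁) ∈ Wset d ∧ ((2:ℤ), γ₂, δ₂) ∈ Wset d ∧
        γ₁ + γ₂ = γ + (d:ℤ) ∧ δ₁ + δ₂ = δ) ↔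
      (d - 2 * δ - 3 * γ, 2 * γ + δ) ∈ weightedTriangle d + weightedTriangle d := by
  simp only [Set.mem_add, Wset, weightedTriangle, Set.mem_ofPred_eq, Prod.exists,
    Prod.mk_add_mk, Prod.mk.injEq]
  constructor
  · rintro ⟨a₁, b₁, a₂, b₂, h₁, h₂, hγ, hδ⟩
    exact ⟨2 * d - 2 * b₁ - 3 * a₁, 2 * a₁ + b₁ - d, by omega,
      2 * d - 2 * b₂ - 3 * a₂, 2 * a₂ + b₂ - d, by omega, by omega, by omega⟩
  · rintro ⟨x₁, y₁, h₁, x₂, y₂, h₂, hX, hY⟩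
    exact ⟨x₁ + 2 * y₁, d - 2 * x₁ - 3 * y₁, x₂ + 2 * y₂, d - 2 * x₂ - 3 * y₂,
      by omega, by omega, by omega, by omega⟩

theorem stmt10 (d k' ρ : ℕ)
    (hkρ : d = 3 * k' + ρ) (hρ : ρ ≤ 2)
    (γ δ : ℤ) (hmem : ((1:ℤ), γ, δ) ∈ Wset d) :
    (∃ γ₁ δ₁ γ₂ δ₂ : ℤ, ((2:ℤ), γ₁, δ₁) ∈ Wset d ∧ ((2:ℤ), γ₂, δ₂) ∈ Wset d ∧
        γ₁ + γ₂ = γ + (d:ℤ) ∧ δ₁ + δ₂ = δ) ↔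
      (¬ (ρ ≠ 0 ∧ γ = (k' : ℤ) ∧ δ = ((ρ / 2 : ℕ) : ℤ)) ∧
       ¬ (Odd d ∧ γ = 0 ∧ δ = 0)) := by
  simp only [Wset, Set.mem_ofPred_eq] at hmem
  obtain ⟨-, -, hγ, hδ, -, hslack⟩ := hmem
  rw [exists_Wset_two_sum_iff, mem_weightedTriangle_add_self_iff (by omega) (by omega)
    (by omega), Int.odd_iff, Nat.odd_iff]
  omega
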